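/- Let π* be a uniform rationality-compatible equilibrium (uRCE), let s be an off-path signal, and let θ_s be a type such that D°(θ_s,s;π*) is not contained in ∪_{θ'≠θ_s} D(θ',s;π*). Then: (i) s ∈ S_{θ_s}; (ii) no type θ' ≠ θ_s satisfies θ' ≿_s θ_s; (iii) the point-mass belief δ_{θ_s} belongs to P̂(s), and for every a* ∈ BR(δ_{θ_s}, s), the profile obtained from π* by replacing π₂*(·|s) with the point mass on a* (leaving all other components unchanged) is again a uRCE. -/

import Mathlib

open scoped Classical
open Finset Filter

noncomputable section

/-- `p` is a probability distribution on the finite type `X`. -/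
def IsDist {X : Type*} [Fintype X] (p : X → ℝ) : Prop :=
  (∀ x, 0 ≤ p x) ∧ ∑ x, p x = 1

variable {Θ S A : Type*} [Fintype Θ] [Fintype S] [Fintype A]

/-- Sender's expected payoff `u₁(θ, s, π₂(·|s))` from signal `s` when the receiver plays `π₂`. -/
def u1R (u₁ : Θ → S → A → ℝ) (π₂ : S → A → ℝ) (θ : Θ) (s : S) : ℝ :=
  ∑ a, π₂ s a * u₁ θ s a

/-- Receiver's expected payoff of action `a` after signal `s` under belief `p`. -/
def expU2 (u₂ : Θ → S → A → ℝ) (p : Θ → ℝ) (s : S) (a : A) : ℝ :=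
  ∑ θ, p θ * u₂ θ s a

/-- `BR(p, s)`: pure best responses to belief `p` after signal `s`. -/
def BRb (u₂ : Θ → S → A → ℝ) (p : Θ → ℝ) (s : S) : Set A :=
  {a | ∀ a', expU2 u₂ p s a' ≤ expU2 u₂ p s a}

/-- `A_s^BR`: actions that best respond to some belief after `s`. -/
def ABR (u₂ : Θ → S → A → ℝ) (s : S) : Set A :=
  {a | ∃ p, IsDist p ∧ a ∈ BRb u₂ p s}

/-- Membership in `Π₂•`: a receiver behavior strategy supported on `A_s^BR` after every `s`. -/
def Rational2 (u₂ : Θ → S → A → ℝ) (π₂ : S → A → ℝ) : Prop :=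
  (∀ s, IsDist (π₂ s)) ∧ ∀ s a, π₂ s a ≠ 0 → a ∈ ABR u₂ s

/-- `u₁(θ,s,π₂(·|s)) ≥ max_{s' ≠ s} u₁(θ,s',π₂(·|s'))`. -/
def WeakBest (u₁ : Θ → S → A → ℝ) (π₂ : S → A → ℝ) (θ : Θ) (s : S) : Prop :=
  ∀ s', s' ≠ s → u1R u₁ π₂ θ s' ≤ u1R u₁ π₂ θ s

/-- `u₁(θ,s,π₂(·|s)) > max_{s' ≠ s} u₁(θ,s',π₂(·|s'))`. -/
def StrictBest (u₁ : Θ → S → A → ℝ) (π₂ : S → A → ℝ) (θ : Θ) (s : S) : Prop :=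
  ∀ s', s' ≠ s → u1R u₁ π₂ θ s' < u1R u₁ π₂ θ s

/-- `θ' ≿_s θ''`: `s` is more rationally-compatible with `θ'` than with `θ''`. -/
def MoreCompat (u₁ u₂ : Θ → S → A → ℝ) (s : S) (θ' θ'' : Θ) : Prop :=
  ∀ π₂, Rational2 u₂ π₂ → WeakBest u₁ π₂ θ'' s → StrictBest u₁ π₂ θ' s

/-- `s` maximizes `s' ↦ u₁(θ, s', π₂(·|s'))`. -/
def GlobalBest (u₁ : Θ → S → A → ℝ) (π₂ : S → A → ℝ) (θ : Θ) (s : S) : Prop :=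
  ∀ s', u1R u₁ π₂ θ s' ≤ u1R u₁ π₂ θ s

/-- `S_θ`: signals that best respond to some (not necessarily rational) receiver strategy. -/
def Sθ (u₁ : Θ → S → A → ℝ) (θ : Θ) : Set S :=
  {s | ∃ π₂ : S → A → ℝ, (∀ s', IsDist (π₂ s')) ∧ GlobalBest u₁ π₂ θ s}

/-- `Θ_s`: types for which `s` is not dominated. -/
def Θtypes (u₁ : Θ → S → A → ℝ) (s : S) : Set Θ := {θ | s ∈ Sθ u₁ θ}

/-- Membership in `Π₁•`. -/
def Rational1 (u₁ : Θ → S → A → ℝ) (π₁ : Θ → S → ℝ) : Prop :=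
  (∀ θ, IsDist (π₁ θ)) ∧ ∀ θ s, π₁ θ s ≠ 0 → s ∈ Sθ u₁ θ

/-- Nash equilibrium of the signaling game. -/
def NashEq (lam : Θ → ℝ) (u₁ u₂ : Θ → S → A → ℝ)
    (π₁ : Θ → S → ℝ) (π₂ : S → A → ℝ) : Prop :=
  (∀ θ, IsDist (π₁ θ)) ∧ (∀ s, IsDist (π₂ s)) ∧
  (∀ θ s, π₁ θ s ≠ 0 → GlobalBest u₁ π₂ θ s) ∧
  (∀ s, (∃ θ, π₁ θ s ≠ 0) → ∀ a, π₂ s a ≠ 0 →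
    ∀ a', ∑ θ, lam θ * π₁ θ s * u₂ θ s a' ≤ ∑ θ, lam θ * π₁ θ s * u₂ θ s a)

/-- Equilibrium expected payoff `E_π[u₁ | θ]`. -/
def eqPayoff (u₁ : Θ → S → A → ℝ) (π₁ : Θ → S → ℝ) (π₂ : S → A → ℝ) (θ : Θ) : ℝ :=
  ∑ s, π₁ θ s * u1R u₁ π₂ θ s

/-- `s` is off the path of play of `π₁`. -/
def OffPath (π₁ : Θ → S → ℝ) (s : S) : Prop := ∀ θ, π₁ θ s = 0

/-- `J̃(s, π)`: types for which some best response to `s` weakly improves on the equilibrium. -/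
def Jt (u₁ u₂ : Θ → S → A → ℝ) (π₁ : Θ → S → ℝ) (π₂ : S → A → ℝ) (s : S) : Set Θ :=
  {θ | ∃ a ∈ ABR u₂ s, eqPayoff u₁ π₁ π₂ θ ≤ u₁ θ s a}

/-- The odds-ratio condition defining `P_{θ'▷θ''}`. -/
def OddsLe (lam : Θ → ℝ) (θ' θ'' : Θ) (p : Θ → ℝ) : Prop :=
  p θ'' * lam θ' ≤ lam θ'' * p θ'

/-- `Δ(T)`: beliefs supported on `T`. -/
def DeltaOn {Θ : Type*} [Fintype Θ] (T : Set Θ) : Set (Θ → ℝ) :=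
  {p | IsDist p ∧ ∀ θ ∉ T, p θ = 0}

/-- `P̃(s, π)`: rationality-compatible beliefs at profile `π`. -/
def Pt (lam : Θ → ℝ) (u₁ u₂ : Θ → S → A → ℝ) (π₁ : Θ → S → ℝ) (π₂ : S → A → ℝ)
    (s : S) : Set (Θ → ℝ) :=
  if (Jt u₁ u₂ π₁ π₂ s).Nonempty then
    DeltaOn (Jt u₁ u₂ π₁ π₂ s) ∩
      {p | ∀ θ' θ'', MoreCompat u₁ u₂ s θ' θ'' → OddsLe lam θ' θ'' p}
  else DeltaOn (Θtypes u₁ s)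

/-- Rationality-compatible equilibrium. -/
def RCE (lam : Θ → ℝ) (u₁ u₂ : Θ → S → A → ℝ)
    (π₁ : Θ → S → ℝ) (π₂ : S → A → ℝ) : Prop :=
  NashEq lam u₁ u₂ π₁ π₂ ∧
  ∀ s a, π₂ s a ≠ 0 → ∃ p ∈ Pt lam u₁ u₂ π₁ π₂ s, a ∈ BRb u₂ p s

/-- `P̂(s)`: uniformly rationality-compatible beliefs. -/
def Ph (lam : Θ → ℝ) (u₁ u₂ : Θ → S → A → ℝ) (s : S) : Set (Θ → ℝ) :=
  DeltaOn (Θtypes u₁ s) ∩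
    {p | ∀ θ' θ'', MoreCompat u₁ u₂ s θ' θ'' → OddsLe lam θ' θ'' p}

/-- Uniform rationality-compatible equilibrium. -/
def URCE (lam : Θ → ℝ) (u₁ u₂ : Θ → S → A → ℝ)
    (π₁ : Θ → S → ℝ) (π₂ : S → A → ℝ) : Prop :=
  NashEq lam u₁ u₂ π₁ π₂ ∧
  ∀ θ s, OffPath π₁ s → ∀ a, (∃ p ∈ Ph lam u₁ u₂ s, a ∈ BRb u₂ p s) →
    u₁ θ s a ≤ eqPayoff u₁ π₁ π₂ θ

/-- Receiver's expected payoff of a mixed action `α` after `s` under belief `p`. -/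
def expU2m (u₂ : Θ → S → A → ℝ) (p : Θ → ℝ) (s : S) (α : A → ℝ) : ℝ :=
  ∑ θ, p θ * ∑ a, α a * u₂ θ s a

/-- `MBR(p, s)`: mixed best responses to belief `p` after `s`. -/
def MBRb (u₂ : Θ → S → A → ℝ) (p : Θ → ℝ) (s : S) : Set (A → ℝ) :=
  {α | IsDist α ∧ ∀ α', IsDist α' → expU2m u₂ p s α' ≤ expU2m u₂ p s α}

/-- `MBR(s)`. -/
def MBR (u₂ : Θ → S → A → ℝ) (s : S) : Set (A → ℝ) :=
  {α | ∃ p, IsDist p ∧ α ∈ MBRb u₂ p s}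

/-- `u₁(θ, s, α)` for a mixed action `α`. -/
def u1m (u₁ : Θ → S → A → ℝ) (θ : Θ) (s : S) (α : A → ℝ) : ℝ :=
  ∑ a, α a * u₁ θ s a

/-- `D(θ, s; π)`. -/
def Dset (u₁ u₂ : Θ → S → A → ℝ) (π₁ : Θ → S → ℝ) (π₂ : S → A → ℝ)
    (θ : Θ) (s : S) : Set (A → ℝ) :=
  {α | α ∈ MBR u₂ s ∧ eqPayoff u₁ π₁ π₂ θ < u1m u₁ θ s α}

/-- `D°(θ, s; π)`. -/
def D0set (u₁ u₂ : Θ → S → A → ℝ) (π₁ : Θ → S → ℝ) (π₂ : S → A → ℝ)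
    (θ : Θ) (s : S) : Set (A → ℝ) :=
  {α | α ∈ MBR u₂ s ∧ eqPayoff u₁ π₁ π₂ θ = u1m u₁ θ s α}

/-!
The witness `α ∈ D°(θ_s,s) \ ⋃_{θ' ≠ θ_s} D(θ',s)` gives `θ_s` exactly its equilibrium payoff
at `s` and every other type at most its equilibrium payoff. Splice `α` into a rational receiver
strategy that follows `π₂*` on path and, at the other off-path signals, plays best responses to
beliefs in `P̂`, which the uRCE makes unprofitable. Under it `s` is a weak best reply for `θ_s`
but not a strict one for any `θ' ≠ θ_s`, which earns at least as much on its equilibrium path;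
so no such `θ'` is more compatible with `s` than `θ_s`. Hence the point mass on `θ_s` meets every odds constraint of `P̂(s)`, and a best
response to it is unprofitable for every type, so it may replace `π₂*(·|s)`.
-/

theorem IsDist.exists_ne_zero {X : Type*} [Fintype X] {p : X → ℝ} (hp : IsDist p) :
    ∃ x, p x ≠ 0 := by
  by_contra! h
  simpa [h] using hp.2

theorem isDist_ite_eq {X : Type*} [Fintype X] (x₀ : X) :
    IsDist (fun x => if x = x₀ then (1 : ℝ) else 0) :=
  ⟨fun x => by by_cases hx : x = x₀ <;> simp [hx], by simp⟩

theorem isDist_div_sum {X : Type*} [Fintype X] {w : X → ℝ} (hw : ∀ x, 0 ≤ w x)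
    (hpos : 0 < ∑ x, w x) : IsDist (fun x => w x / ∑ y, w y) :=
  ⟨fun x => div_nonneg (hw x) hpos.le, by rw [← Finset.sum_div, div_self hpos.ne']⟩

section

omit [Fintype Θ] [Fintype S]

theorem isDist_update {π₂ : S → A → ℝ} (hπ₂ : ∀ t, IsDist (π₂ t)) {σ : A → ℝ} (hσ : IsDist σ)
    (s t : S) : IsDist (Function.update π₂ s σ t) := by
  rcases eq_or_ne t s with rfl | ht
  · simpa using hσ
  · simpa [ht] using hπ₂ t

theorem u1R_eq_u1m (u₁ : Θ → S → A → ℝ) (π₂ : S → A → ℝ) (θ : Θ) (s : S) :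
    u1R u₁ π₂ θ s = u1m u₁ θ s (π₂ s) := rfl

theorem u1m_ite_eq (u₁ : Θ → S → A → ℝ) (θ : Θ) (s : S) (a : A) :
    u1m u₁ θ s (fun a' => if a' = a then 1 else 0) = u₁ θ s a := by
  simp [u1m]

theorem u1R_update_self (u₁ : Θ → S → A → ℝ) (π₂ : S → A → ℝ) (θ : Θ) (s : S) (σ : A → ℝ) :
    u1R u₁ (Function.update π₂ s σ) θ s = u1m u₁ θ s σ := by
  simp [u1R_eq_u1m]

theorem u1R_update_of_ne (u₁ : Θ → S → A → ℝ) (π₂ : S → A → ℝ) (θ : Θ) {s t : S} (ht : t ≠ s)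
    (σ : A → ℝ) : u1R u₁ (Function.update π₂ s σ) θ t = u1R u₁ π₂ θ t := by
  simp [u1R_eq_u1m, ht]

end

omit [Fintype Θ] in
theorem eqPayoff_update_of_offPath (u₁ : Θ → S → A → ℝ) {π₁ : Θ → S → ℝ} (π₂ : S → A → ℝ)
    {s : S} (hs : OffPath π₁ s) (σ : A → ℝ) (θ : Θ) :
    eqPayoff u₁ π₁ (Function.update π₂ s σ) θ = eqPayoff u₁ π₁ π₂ θ := by
  refine Finset.sum_congr rfl fun t _ => ?_
  rcases eq_or_ne t s with rfl | ht
  · simp [hs θ]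
  · rw [u1R_update_of_ne u₁ π₂ θ ht]

section

omit [Fintype S]

theorem expU2m_eq_sum (u₂ : Θ → S → A → ℝ) (p : Θ → ℝ) (s : S) (α : A → ℝ) :
    expU2m u₂ p s α = ∑ a, α a * expU2 u₂ p s a := by
  simp only [expU2m, expU2, Finset.mul_sum]
  rw [Finset.sum_comm]
  exact Finset.sum_congr rfl fun _ _ => Finset.sum_congr rfl fun _ _ => by ring

theorem exists_mem_BRb [Nonempty A] (u₂ : Θ → S → A → ℝ) (p : Θ → ℝ) (s : S) :
    ∃ a, a ∈ BRb u₂ p s := by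
  obtain ⟨a, -, ha⟩ := Finset.exists_max_image Finset.univ (expU2 u₂ p s) Finset.univ_nonempty
  exact ⟨a, fun a' => ha a' (Finset.mem_univ a')⟩

theorem mem_BRb_of_mem_MBRb {u₂ : Θ → S → A → ℝ} {p : Θ → ℝ} {s : S} {α : A → ℝ}
    (hα : α ∈ MBRb u₂ p s) {a : A} (ha : α a ≠ 0) : a ∈ BRb u₂ p s := by
  have : Nonempty A := ⟨a⟩
  obtain ⟨b, hb⟩ := exists_mem_BRb u₂ p s
  set e := expU2 u₂ p s
  by_contra hab
  obtain ⟨a', ha'⟩ : ∃ a', e a < e a' := by simpa [BRb] using hab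
  have hmix_lt : ∑ a', α a' * e a' < ∑ a', α a' * e b :=
    Finset.sum_lt_sum (fun a' _ => mul_le_mul_of_nonneg_left (hb a') (hα.1.1 a'))
      ⟨a, Finset.mem_univ a, mul_lt_mul_of_pos_left (ha'.trans_le (hb a'))
        ((hα.1.1 a).lt_of_ne' ha)⟩
  have hpure_le := hα.2 _ (isDist_ite_eq b)
  rw [expU2m_eq_sum, expU2m_eq_sum] at hpure_le
  simp only [ite_mul, one_mul, zero_mul, Finset.sum_ite_eq', Finset.mem_univ, if_true]
    at hpure_le
  rw [← Finset.sum_mul, hα.1.2, one_mul] at hmix_lt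
  linarith

end

section Equilibrium

variable {lam : Θ → ℝ} {u₁ u₂ : Θ → S → A → ℝ} {π₁ : Θ → S → ℝ} {π₂ : S → A → ℝ}

theorem NashEq.eqPayoff_eq_u1R (h : NashEq lam u₁ u₂ π₁ π₂) {θ : Θ} {s : S}
    (hs : π₁ θ s ≠ 0) : eqPayoff u₁ π₁ π₂ θ = u1R u₁ π₂ θ s := by
  have hterm : ∀ t, π₁ θ t * u1R u₁ π₂ θ t = π₁ θ t * u1R u₁ π₂ θ s := by
    intro t
    rcases eq_or_ne (π₁ θ t) 0 with ht | ht
    · simp [ht]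
    · rw [le_antisymm (h.2.2.1 θ s hs t) (h.2.2.1 θ t ht s)]
  rw [eqPayoff, Finset.sum_congr rfl fun t _ => hterm t, ← Finset.sum_mul, (h.1 θ).2, one_mul]

theorem NashEq.u1R_le_eqPayoff (h : NashEq lam u₁ u₂ π₁ π₂) (θ : Θ) (t : S) :
    u1R u₁ π₂ θ t ≤ eqPayoff u₁ π₁ π₂ θ := by
  obtain ⟨s, hs⟩ := (h.1 θ).exists_ne_zero
  rw [h.eqPayoff_eq_u1R hs]
  exact h.2.2.1 θ s hs t

theorem NashEq.mem_Sθ (h : NashEq lam u₁ u₂ π₁ π₂) {θ : Θ} {s : S} {σ : A → ℝ}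
    (hσ : IsDist σ) (hle : eqPayoff u₁ π₁ π₂ θ ≤ u1m u₁ θ s σ) : s ∈ Sθ u₁ θ := by
  refine ⟨Function.update π₂ s σ, isDist_update h.2.1 hσ s, fun t => ?_⟩
  rcases eq_or_ne t s with rfl | ht
  · exact le_rfl
  · rw [u1R_update_of_ne u₁ π₂ θ ht, u1R_update_self]
    exact (h.u1R_le_eqPayoff θ t).trans hle

/-- The Bayesian posterior at an on-path signal rationalizes the receiver's play there. -/
theorem NashEq.mem_ABR (hpos : ∀ θ, 0 < lam θ) (h : NashEq lam u₁ u₂ π₁ π₂) {θ₀ : Θ} {t : S}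
    (hθ₀ : π₁ θ₀ t ≠ 0) {a : A} (ha : π₂ t a ≠ 0) : a ∈ ABR u₂ t := by
  set w : Θ → ℝ := fun θ => lam θ * π₁ θ t
  have hw : ∀ θ, 0 ≤ w θ := fun θ => mul_nonneg (hpos θ).le ((h.1 θ).1 t)
  have hwpos : 0 < ∑ θ, w θ := Finset.sum_pos' (fun θ _ => hw θ)
    ⟨θ₀, Finset.mem_univ θ₀, mul_pos (hpos θ₀) (((h.1 θ₀).1 t).lt_of_ne' hθ₀)⟩
  have hposterior : ∀ b, expU2 u₂ (fun θ => w θ / ∑ θ', w θ') t b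
      = (∑ θ, lam θ * π₁ θ t * u₂ θ t b) / ∑ θ', w θ' := by
    intro b
    rw [expU2, Finset.sum_div]
    exact Finset.sum_congr rfl fun θ _ => by ring
  refine ⟨_, isDist_div_sum hw hwpos, fun a' => ?_⟩
  rw [hposterior, hposterior]
  exact div_le_div_of_nonneg_right (h.2.2.2 t ⟨θ₀, hθ₀⟩ a ha a') hwpos.le

omit [Fintype S] in
/-- The prior conditioned on the types for which `t` is a weak best reply to some rational
receiver strategy lies in `P̂(t)`: that set of types is closed upwards under `≿_t`. -/
theorem Ph_nonempty_of_weakBest (hpos : ∀ θ, 0 < lam θ) {t : S} {θ₀ : Θ} {Q : S → A → ℝ}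
    (hQ : Rational2 u₂ Q) (hθ₀ : WeakBest u₁ Q θ₀ t) : (Ph lam u₁ u₂ t).Nonempty := by
  set W : Set Θ := {θ | ∃ Q, Rational2 u₂ Q ∧ WeakBest u₁ Q θ t}
  set w : Θ → ℝ := W.indicator lam
  have hw : ∀ θ, 0 ≤ w θ := Set.indicator_nonneg fun θ _ => (hpos θ).le
  have hwpos : 0 < ∑ θ, w θ := Finset.sum_pos' (fun θ _ => hw θ)
    ⟨θ₀, Finset.mem_univ θ₀, by
      simpa only [w, Set.indicator_of_mem (show θ₀ ∈ W from ⟨Q, hQ, hθ₀⟩)] using hpos θ₀⟩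
  have hWΘ : W ⊆ Θtypes u₁ t := fun θ ⟨Q, hQ, hθ⟩ => ⟨Q, hQ.1, fun s' => by
    rcases eq_or_ne s' t with rfl | hs'
    · exact le_rfl
    · exact hθ s' hs'⟩
  refine ⟨_, ⟨isDist_div_sum hw hwpos, fun θ hθ => ?_⟩, fun θ' θ'' hmc => ?_⟩
  · simp [w, Set.indicator_of_notMem fun h => hθ (hWΘ h)]
  · by_cases h'' : θ'' ∈ W
    · have h' : θ' ∈ W := by
        obtain ⟨Q, hQ, hθ''⟩ := h''
        exact ⟨Q, hQ, fun s' hs' => (hmc Q hQ hθ'' s' hs').le⟩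
      simp only [OddsLe, w, Set.indicator_of_mem h', Set.indicator_of_mem h'']
      exact le_of_eq (by ring)
    · simp only [OddsLe, w, Set.indicator_of_notMem h'', zero_div, zero_mul]
      exact mul_nonneg (hpos θ'').le (div_nonneg (hw θ') hwpos.le)

/-- A signal that is optimal for `θ` under a rational `Q` has `P̂` nonempty, so it suffices to
bound the payoff at such signals. -/
theorem u1R_le_of_forall_Ph_nonempty (hpos : ∀ θ, 0 < lam θ) {Q : S → A → ℝ}
    (hQ : Rational2 u₂ Q) {θ : Θ} {c : ℝ}
    (hc : ∀ t, (Ph lam u₁ u₂ t).Nonempty → u1R u₁ Q θ t ≤ c) (t : S) : u1R u₁ Q θ t ≤ c := by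
  have : Nonempty S := ⟨t⟩
  obtain ⟨m, -, hm⟩ :=
    Finset.exists_max_image Finset.univ (u1R u₁ Q θ) Finset.univ_nonempty
  have hmbest : WeakBest u₁ Q θ m := fun s' _ => hm s' (Finset.mem_univ s')
  exact (hm t (Finset.mem_univ t)).trans (hc m (Ph_nonempty_of_weakBest hpos hQ hmbest))

theorem URCE.exists_unprofitable_action [Nonempty Θ] [Nonempty A]
    (h : URCE lam u₁ u₂ π₁ π₂) (t : S) : ∃ a ∈ ABR u₂ t,
      OffPath π₁ t → (Ph lam u₁ u₂ t).Nonempty → ∀ θ, u₁ θ t a ≤ eqPayoff u₁ π₁ π₂ θ := by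
  by_cases hPh : (Ph lam u₁ u₂ t).Nonempty
  · obtain ⟨p, hp⟩ := hPh
    obtain ⟨a, ha⟩ := exists_mem_BRb u₂ p t
    exact ⟨a, ⟨p, hp.1.1, ha⟩, fun hoff _ θ => h.2 θ t hoff a ⟨p, hp, ha⟩⟩
  · obtain ⟨a, ha⟩ := exists_mem_BRb u₂ (fun θ => if θ = Classical.arbitrary Θ then 1 else 0) t
    exact ⟨a, ⟨_, isDist_ite_eq _, ha⟩, fun _ h' => absurd h' hPh⟩

theorem URCE.exists_rational_unprofitable_offPath [Nonempty Θ] [Nonempty A]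
    (hpos : ∀ θ, 0 < lam θ) (h : URCE lam u₁ u₂ π₁ π₂) :
    ∃ Q, Rational2 u₂ Q ∧ (∀ t, ¬ OffPath π₁ t → Q t = π₂ t) ∧
      ∀ t, OffPath π₁ t → (Ph lam u₁ u₂ t).Nonempty →
        ∀ θ, u1R u₁ Q θ t ≤ eqPayoff u₁ π₁ π₂ θ := by
  choose pick hpickABR hpick using h.exists_unprofitable_action
  refine ⟨fun t => if OffPath π₁ t then fun a => if a = pick t then 1 else 0 else π₂ t,
    ⟨fun t => ?_, fun t a ha => ?_⟩, fun t ht => if_neg ht, fun t ht hPh θ => ?_⟩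
  · dsimp only
    split_ifs
    exacts [isDist_ite_eq _, h.1.2.1 t]
  · by_cases ht : OffPath π₁ t
    · obtain rfl : a = pick t := by simpa [ht] using ha
      exact hpickABR t
    · obtain ⟨θ, hθ⟩ := not_forall.mp ht
      exact h.1.mem_ABR hpos hθ (by simpa [ht] using ha)
  · rw [u1R_eq_u1m, if_pos ht, u1m_ite_eq]
    exact hpick t ht hPh θ

omit [Fintype S] in
theorem Rational2.update {Q : S → A → ℝ} (hQ : Rational2 u₂ Q) {s : S} {σ : A → ℝ}
    (hσ : σ ∈ MBR u₂ s) : Rational2 u₂ (Function.update Q s σ) := by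
  obtain ⟨p, hp, hσp⟩ := hσ
  refine ⟨isDist_update hQ.1 hσp.1 s, fun t a ha => ?_⟩
  rcases eq_or_ne t s with rfl | hts
  · exact ⟨p, hp, mem_BRb_of_mem_MBRb hσp (by simpa using ha)⟩
  · exact hQ.2 t a (by simpa [hts] using ha)

theorem URCE.exists_rational_update [Nonempty Θ] [Nonempty A] (hpos : ∀ θ, 0 < lam θ)
    (h : URCE lam u₁ u₂ π₁ π₂) {s : S} (hs : OffPath π₁ s) {σ : A → ℝ} (hσ : σ ∈ MBR u₂ s) :
    ∃ Q, Rational2 u₂ Q ∧ Q s = σ ∧ (∀ θ t, π₁ θ t ≠ 0 → Q t = π₂ t) ∧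
      ∀ θ, u1m u₁ θ s σ ≤ eqPayoff u₁ π₁ π₂ θ → ∀ t, u1R u₁ Q θ t ≤ eqPayoff u₁ π₁ π₂ θ := by
  obtain ⟨Q₀, hQ₀, hQ₀_on, hQ₀_off⟩ := h.exists_rational_unprofitable_offPath hpos
  have hQ := hQ₀.update hσ
  refine ⟨_, hQ, Function.update_self s σ Q₀, fun θ t ht => ?_,
    fun θ hθ => u1R_le_of_forall_Ph_nonempty hpos hQ fun t hPh => ?_⟩
  · rw [Function.update_of_ne (by rintro rfl; exact ht (hs θ)), hQ₀_on t fun h => ht (h θ)]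
  rcases eq_or_ne t s with rfl | hts
  · rwa [u1R_update_self]
  rw [u1R_update_of_ne u₁ Q₀ θ hts]
  by_cases ht : OffPath π₁ t
  · exact hQ₀_off t ht hPh θ
  · rw [u1R_eq_u1m, hQ₀_on t ht]
    exact h.1.u1R_le_eqPayoff θ t

omit [Fintype S] in
theorem Ph_ite_eq_mem (hpos : ∀ θ, 0 < lam θ) {s : S} {θs : Θ} (hθs : s ∈ Sθ u₁ θs)
    (hmax : ∀ θ', θ' ≠ θs → ¬ MoreCompat u₁ u₂ s θ' θs) :
    (fun θ => if θ = θs then (1 : ℝ) else 0) ∈ Ph lam u₁ u₂ s := by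
  refine ⟨⟨isDist_ite_eq θs, fun θ hθ => if_neg (by rintro rfl; exact hθ hθs)⟩,
    fun θ' θ'' hmc => ?_⟩
  by_cases h' : θ' = θs
  · subst h'
    by_cases h'' : θ'' = θ' <;> simp [OddsLe, h'', (hpos θ'').le]
  · have h'' : θ'' ≠ θs := by rintro rfl; exact hmax θ' h' hmc
    simp [OddsLe, h', h'']

theorem URCE.update_of_offPath (h : URCE lam u₁ u₂ π₁ π₂) {s : S} (hs : OffPath π₁ s)
    {σ : A → ℝ} (hσ : IsDist σ) (hle : ∀ θ, u1m u₁ θ s σ ≤ eqPayoff u₁ π₁ π₂ θ) :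
    URCE lam u₁ u₂ π₁ (Function.update π₂ s σ) := by
  obtain ⟨hN, hcap⟩ := h
  have hs_ne : ∀ {θ t}, π₁ θ t ≠ 0 → t ≠ s := by
    rintro θ t ht rfl
    exact ht (hs θ)
  refine ⟨⟨hN.1, isDist_update hN.2.1 hσ s, fun θ t ht t' => ?_, fun t ⟨θ, ht⟩ a ha => ?_⟩,
    fun θ t ht a ha => ?_⟩
  · rw [u1R_update_of_ne u₁ π₂ θ (hs_ne ht), ← hN.eqPayoff_eq_u1R ht]
    rcases eq_or_ne t' s with rfl | ht'
    · rw [u1R_update_self]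
      exact hle θ
    · rw [u1R_update_of_ne u₁ π₂ θ ht']
      exact hN.u1R_le_eqPayoff θ t'
  · rw [Function.update_of_ne (hs_ne ht)] at ha
    exact hN.2.2.2 t ⟨θ, ht⟩ a ha
  · rw [eqPayoff_update_of_offPath u₁ π₂ hs]
    exact hcap θ t ht a ha

end Equilibrium

theorem NWBR_surviving_type_general [Nonempty Θ] [Nonempty A]
    (lam : Θ → ℝ) (hpos : ∀ θ, 0 < lam θ)
    (u₁ u₂ : Θ → S → A → ℝ) (π₁ : Θ → S → ℝ) (π₂ : S → A → ℝ)
    (h : URCE lam u₁ u₂ π₁ π₂)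
    (s : S) (hoff : OffPath π₁ s) (θs : Θ)
    (hns : ¬ (D0set u₁ u₂ π₁ π₂ θs s
        ⊆ {α | ∃ θ', θ' ≠ θs ∧ α ∈ Dset u₁ u₂ π₁ π₂ θ' s})) :
    s ∈ Sθ u₁ θs ∧
    (∀ θ', θ' ≠ θs → ¬ MoreCompat u₁ u₂ s θ' θs) ∧
    (fun θ' => if θ' = θs then (1 : ℝ) else 0) ∈ Ph lam u₁ u₂ s ∧
    ∀ astar : A, astar ∈ BRb u₂ (fun θ' => if θ' = θs then (1 : ℝ) else 0) s →
      URCE lam u₁ u₂ π₁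
        (fun s' a => if s' = s then (if a = astar then 1 else 0) else π₂ s' a) := by
  obtain ⟨α, ⟨hαMBR, hαeq⟩, hαn⟩ := Set.not_subset.mp hns
  have hαle : ∀ θ', θ' ≠ θs → u1m u₁ θ' s α ≤ eqPayoff u₁ π₁ π₂ θ' :=
    fun θ' hθ' => not_lt.mp fun hlt => hαn ⟨θ', hθ', hαMBR, hlt⟩
  have hαdist : IsDist α := let ⟨_, _, hαp⟩ := hαMBR; hαp.1
  have hSθ : s ∈ Sθ u₁ θs := h.1.mem_Sθ hαdist hαeq.le
  have hmax : ∀ θ', θ' ≠ θs → ¬ MoreCompat u₁ u₂ s θ' θs := by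
    intro θ' hθ' hmc
    obtain ⟨Q, hQ, hQs, hQ_on, hQ_le⟩ := h.exists_rational_update hpos hoff hαMBR
    have hθs : WeakBest u₁ Q θs s := fun t _ => by
      rw [u1R_eq_u1m u₁ Q θs s, hQs, ← hαeq]
      exact hQ_le θs hαeq.ge t
    obtain ⟨s₀, hs₀⟩ := (h.1.1 θ').exists_ne_zero
    have hs₀s : s₀ ≠ s := by rintro rfl; exact hs₀ (hoff θ')
    have hQs₀ : u1R u₁ Q θ' s₀ = eqPayoff u₁ π₁ π₂ θ' := by
      rw [u1R_eq_u1m, hQ_on θ' s₀ hs₀, h.1.eqPayoff_eq_u1R hs₀, u1R_eq_u1m]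
    have hQs' : u1R u₁ Q θ' s = u1m u₁ θ' s α := by rw [u1R_eq_u1m, hQs]
    linarith [hαle θ' hθ', hmc Q hQ hθs s₀ hs₀s]
  have hδ := Ph_ite_eq_mem hpos hSθ hmax
  refine ⟨hSθ, hmax, hδ, fun astar hastar => ?_⟩
  have hupdate : (fun s' a => if s' = s then (if a = astar then (1 : ℝ) else 0) else π₂ s' a)
      = Function.update π₂ s (fun a => if a = astar then 1 else 0) := by
    funext s' a
    by_cases hs' : s' = s <;> simp [hs']
  rw [hupdate]
  exact h.update_of_offPath hoff (isDist_ite_eq astar) fun θ => by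
    rw [u1m_ite_eq]
    exact h.2 θ s hoff astar ⟨_, hδ, hastar⟩

/-- at a uRCE, if `s` is off-path and `D°(θ_s,s;π*) ⊄ ∪_{θ'≠θ_s} D(θ',s;π*)`,
then `s ∈ S_{θ_s}`, no other type is more rationally compatible with `s` than `θ_s`,
the point mass on `θ_s` lies in `P̂(s)`, and replacing `π₂*(·|s)` by a point mass on any
best response to that belief yields again a uRCE. -/
theorem NWBR_surviving_type [Nonempty Θ] [Nonempty A] (hS : 1 < Fintype.card S)
    (lam : Θ → ℝ) (hpos : ∀ θ, 0 < lam θ) (hsum : ∑ θ, lam θ = 1)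
    (u₁ u₂ : Θ → S → A → ℝ) (π₁ : Θ → S → ℝ) (π₂ : S → A → ℝ)
    (h : URCE lam u₁ u₂ π₁ π₂)
    (s : S) (hoff : OffPath π₁ s) (θs : Θ)
    (hns : ¬ (D0set u₁ u₂ π₁ π₂ θs s
        ⊆ {α | ∃ θ', θ' ≠ θs ∧ α ∈ Dset u₁ u₂ π₁ π₂ θ' s})) :
    s ∈ Sθ u₁ θs ∧
    (∀ θ', θ' ≠ θs → ¬ MoreCompat u₁ u₂ s θ' θs) ∧
    (fun θ' => if θ' = θs then (1 : ℝ) else 0) ∈ Ph lam u₁ u₂ s ∧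
    ∀ astar : A, astar ∈ BRb u₂ (fun θ' => if θ' = θs then (1 : ℝ) else 0) s →
      URCE lam u₁ u₂ π₁
        (fun s' a => if s' = s then (if a = astar then 1 else 0) else π₂ s' a) :=
  NWBR_surviving_type_general lam hpos u₁ u₂ π₁ π₂ h s hoff θs hns

end
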